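/- arXiv:2307.05846 — 3 statements merged into one kernel-verified Lean document; each statement's English description precedes it below -/
import Mathlib

section
/- If the multivariate forecast distribution F is auto-calibrated for Y (i.e., the conditional law of Y given F equals F), then F is probabilistically calibrated with respect to any measurable simple pre-rank function ρ: ℝ^d → ℝ; that is, the randomized PIT Z_{F_ρ} = F_ρ(ρ(Y)-) + V[F_ρ(ρ(Y)) - F_ρ(ρ(Y)-)] is uniformly distributed on [0,1]. -/
open MeasureTheory ProbabilityTheory Set Filter
open scoped ENNReal Topology

namespace AutoCalibAux


noncomputable def mIic (ν : Measure ℝ) (x : ℝ) : ℝ≥0∞ :=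
  ⨅ n : ℕ, ν (Iic ((⌈x * 2 ^ n⌉ : ℤ) / 2 ^ n))

noncomputable def mIio (ν : Measure ℝ) (x : ℝ) : ℝ≥0∞ :=
  ⨆ n : ℕ, ν (Iic (((⌈x * 2 ^ n⌉ : ℤ) - 1) / 2 ^ n))

lemma measurable_mIic : Measurable fun p : Measure ℝ × ℝ => mIic p.1 p.2 := by
  refine Measurable.iInf fun n => ?_
  have h1 : Measurable fun q : Measure ℝ × ℤ => q.1 (Iic ((q.2 : ℝ) / 2 ^ n)) :=
    measurable_from_prod_countable_left fun k => by
      simpa using Measure.measurable_coe (measurableSet_Iic (a := ((k : ℝ) / 2 ^ n)))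
  exact h1.comp (measurable_fst.prodMk
    (Int.measurable_ceil.comp (measurable_snd.mul_const _)))

lemma measurable_mIio : Measurable fun p : Measure ℝ × ℝ => mIio p.1 p.2 := by
  refine Measurable.iSup fun n => ?_
  have h1 : Measurable fun q : Measure ℝ × ℤ => q.1 (Iic (((q.2 : ℝ) - 1) / 2 ^ n)) :=
    measurable_from_prod_countable_left fun k => by
      simpa using Measure.measurable_coe (measurableSet_Iic (a := (((k : ℝ) - 1) / 2 ^ n)))
  have h2 : Measurable fun p : Measure ℝ × ℝ => (p.1, ⌈p.2 * 2 ^ n⌉) :=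
    measurable_fst.prodMk (Int.measurable_ceil.comp (measurable_snd.mul_const _))
  have := h1.comp h2
  exact this

lemma measure_Iio_eq_iSup (ν : Measure ℝ) (a : ℝ) :
    ν (Iio a) = ⨆ n : ℕ, ν (Iic (a - 1 / (n + 1))) := by
  have hmono : Monotone fun n : ℕ => Iic (a - 1 / ((n : ℝ) + 1)) := by
    intro n m hnm
    refine Iic_subset_Iic.2 (sub_le_sub_left ?_ a)
    apply one_div_le_one_div_of_le
    · positivity
    · exact_mod_cast Nat.succ_le_succ hnm
  rw [← hmono.measure_iUnion]
  congr 1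
  ext y
  simp only [mem_iUnion, mem_Iic, mem_Iio]
  constructor
  · intro hy
    obtain ⟨n, hn⟩ := exists_nat_one_div_lt (K := ℝ) (sub_pos.2 hy)
    exact ⟨n, by linarith⟩
  · rintro ⟨n, hn⟩
    have : 0 < 1 / ((n : ℝ) + 1) := by positivity
    linarith

lemma measure_Iic_eq_iInf (ν : Measure ℝ) [IsFiniteMeasure ν] (a : ℝ) :
    ν (Iic a) = ⨅ n : ℕ, ν (Iic (a + 1 / (n + 1))) := by
  have hanti : Antitone fun n : ℕ => Iic (a + 1 / ((n : ℝ) + 1)) := by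
    intro n m hnm
    refine Iic_subset_Iic.2 (add_le_add_right ?_ a)
    apply one_div_le_one_div_of_le
    · positivity
    · exact_mod_cast Nat.succ_le_succ hnm
  rw [← hanti.measure_iInter (fun n => measurableSet_Iic.nullMeasurableSet)
      ⟨0, measure_ne_top ν _⟩]
  congr 1
  ext y
  simp only [mem_iInter, mem_Iic]
  constructor
  · intro hy n
    have : 0 < 1 / ((n : ℝ) + 1) := by positivity
    linarith
  · intro hy
    by_contra hc
    push_neg at hc
    obtain ⟨n, hn⟩ := exists_nat_one_div_lt (K := ℝ) (sub_pos.2 hc)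
    have := hy n
    linarith

lemma mIic_eq (ν : Measure ℝ) [IsFiniteMeasure ν] (x : ℝ) : mIic ν x = ν (Iic x) := by
  refine le_antisymm ?_ (le_iInf fun n => measure_mono (Iic_subset_Iic.2 ?_))
  · rw [measure_Iic_eq_iInf ν x]
    refine le_iInf fun m => ?_
    refine (iInf_le _ m).trans (measure_mono (Iic_subset_Iic.2 ?_))
    have h2 : (0:ℝ) < 2 ^ m := by positivity
    have hm1 : (0:ℝ) < (m : ℝ) + 1 := by positivity
    have hcast : (m : ℝ) + 1 ≤ 2 ^ m := by
      have := Nat.lt_two_pow_self (n := m)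
      exact_mod_cast Nat.succ_le_of_lt this
    have h1 : ((⌈x * 2 ^ m⌉ : ℤ) : ℝ) ≤ x * 2 ^ m + 1 := (Int.ceil_lt_add_one _).le
    have h3 : (1:ℝ) / 2 ^ m ≤ 1 / ((m : ℝ) + 1) := one_div_le_one_div_of_le hm1 hcast
    calc ((⌈x * 2 ^ m⌉ : ℤ) : ℝ) / 2 ^ m ≤ (x * 2 ^ m + 1) / 2 ^ m := by
          gcongr
      _ = x + 1 / 2 ^ m := by
          rw [add_div, mul_div_cancel_right₀ _ (ne_of_gt h2)]
      _ ≤ x + 1 / ((m : ℝ) + 1) := by linarith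
  · have h2 : (0:ℝ) < 2 ^ n := by positivity
    rw [le_div_iff₀ h2]
    exact Int.le_ceil _

lemma mIio_eq (ν : Measure ℝ) (x : ℝ) : mIio ν x = ν (Iio x) := by
  refine le_antisymm (iSup_le fun n => measure_mono (Iic_subset_Iio.2 ?_)) ?_
  · have h2 : (0:ℝ) < 2 ^ n := by positivity
    rw [div_lt_iff₀ h2]
    linarith [Int.ceil_lt_add_one (x * 2 ^ n)]
  · rw [measure_Iio_eq_iSup ν x]
    refine iSup_le fun m => le_iSup_of_le m (measure_mono (Iic_subset_Iic.2 ?_))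
    have h2 : (0:ℝ) < 2 ^ m := by positivity
    have hm1 : (0:ℝ) < (m : ℝ) + 1 := by positivity
    have hcast : (m : ℝ) + 1 ≤ 2 ^ m := by
      have := Nat.lt_two_pow_self (n := m)
      exact_mod_cast Nat.succ_le_of_lt this
    have h3 : (1:ℝ) / 2 ^ m ≤ 1 / ((m : ℝ) + 1) := one_div_le_one_div_of_le hm1 hcast
    rw [le_div_iff₀ h2]
    have h1 : x * 2 ^ m ≤ ((⌈x * 2 ^ m⌉ : ℤ) : ℝ) := Int.le_ceil _
    have : (x - 1 / ((m:ℝ) + 1)) * 2 ^ m = x * 2 ^ m - (1 / ((m:ℝ)+1)) * 2 ^ m := by ring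
    rw [this]
    have h4 : (1:ℝ) ≤ (1 / ((m:ℝ)+1)) * 2 ^ m := by
      rw [div_mul_eq_mul_div, one_mul, le_div_iff₀ hm1, one_mul]
      exact hcast
    linarith




lemma Usec {L C t : ℝ} (hL0 : 0 ≤ L) (hLC : L ≤ C) :
    (volume.restrict (Icc (0:ℝ) 1)) {v : ℝ | L + v * (C - L) ≤ t}
      = if C ≤ t then 1 else if L ≤ t then ENNReal.ofReal ((t - L) / (C - L)) else 0 := by
  rw [Measure.restrict_apply' measurableSet_Icc]
  split_ifs with h1 h2
  · rw [inter_eq_self_of_subset_right ?_]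
    · simp [Real.volume_Icc]
    · intro v hv
      simp only [mem_setOf_eq]
      nlinarith [hv.1, hv.2]
  · push_neg at h1
    have hD : 0 < C - L := by linarith
    have hset : {v : ℝ | L + v * (C - L) ≤ t} ∩ Icc (0:ℝ) 1 = Icc 0 ((t - L) / (C - L)) := by
      ext v
      simp only [mem_inter_iff, mem_setOf_eq, mem_Icc]
      constructor
      · rintro ⟨hv, h0, _⟩
        exact ⟨h0, by rw [le_div_iff₀ hD]; linarith⟩
      · rintro ⟨h0, hv⟩
        rw [le_div_iff₀ hD] at hv
        have hv1 : v ≤ 1 := by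
          nlinarith
        exact ⟨by linarith, h0, hv1⟩
    rw [hset, Real.volume_Icc, sub_zero]
  · push_neg at h2
    have hset : {v : ℝ | L + v * (C - L) ≤ t} ∩ Icc (0:ℝ) 1 = (∅ : Set ℝ) := by
      ext v
      simp only [mem_inter_iff, mem_setOf_eq, mem_Icc, mem_empty_iff_false, iff_false, not_and]
      intro hv h0 _
      nlinarith
    rw [hset]
    simp

lemma leftLim_cdf_eq (ν : Measure ℝ) [IsProbabilityMeasure ν] (x : ℝ) :
    Function.leftLim (cdf ν) x = (ν (Iio x)).toReal := by
  have h0 : 0 ≤ Function.leftLim (cdf ν) x :=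
    (cdf_nonneg ν (x - 1)).trans ((monotone_cdf ν).le_leftLim (sub_one_lt x))
  have hll : Function.leftLim (cdf ν) x ≤ cdf ν x := (monotone_cdf ν).leftLim_le le_rfl
  have key : ν (Iio x) = ENNReal.ofReal (Function.leftLim (cdf ν) x) := by
    conv_lhs => rw [← measure_cdf ν]
    have hu : (cdf ν).measure (Iic x) = (cdf ν).measure (Iio x) + (cdf ν).measure {x} := by
      rw [← Iio_union_right, measure_union (by simp) (measurableSet_singleton x)]
    rw [(cdf ν).measure_Iic (tendsto_cdf_atBot ν), (cdf ν).measure_singleton, sub_zero] at hu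
    have h2 : (cdf ν).measure (Iio x)
        = ENNReal.ofReal (cdf ν x) - ENNReal.ofReal (cdf ν x - Function.leftLim (cdf ν) x) :=
      ENNReal.eq_sub_of_add_eq ENNReal.ofReal_ne_top hu.symm
    rw [h2, ← ENNReal.ofReal_sub _ (by linarith)]
    congr 1
    ring
  rw [key, ENNReal.toReal_ofReal h0]

lemma measurable_G (ν : Measure ℝ) [IsFiniteMeasure ν] :
    Measurable fun x : ℝ => (ν (Iic x)).toReal := by
  refine Monotone.measurable fun a b hab => ?_
  exact ENNReal.toReal_mono (measure_ne_top ν _) (measure_mono (Iic_subset_Iic.2 hab))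

lemma measurable_L (ν : Measure ℝ) [IsFiniteMeasure ν] :
    Measurable fun x : ℝ => (ν (Iio x)).toReal := by
  refine Monotone.measurable fun a b hab => ?_
  exact ENNReal.toReal_mono (measure_ne_top ν _) (measure_mono (Iio_subset_Iio hab))

lemma chi_eq (ν : Measure ℝ) [IsFiniteMeasure ν] (t : ℝ) :
    (fun x : ℝ => (volume.restrict (Icc (0:ℝ) 1))
        {v : ℝ | (ν (Iio x)).toReal + v * ((ν (Iic x)).toReal - (ν (Iio x)).toReal) ≤ t})
    = fun x : ℝ => if (ν (Iic x)).toReal ≤ t then 1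
        else if (ν (Iio x)).toReal ≤ t then
          ENNReal.ofReal ((t - (ν (Iio x)).toReal) / ((ν (Iic x)).toReal - (ν (Iio x)).toReal))
        else 0 := by
  funext x
  exact Usec ENNReal.toReal_nonneg
    (ENNReal.toReal_mono (measure_ne_top ν _) (measure_mono Iio_subset_Iic_self))

lemma measurable_chi (ν : Measure ℝ) [IsFiniteMeasure ν] (t : ℝ) :
    Measurable fun x : ℝ => (volume.restrict (Icc (0:ℝ) 1))
        {v : ℝ | (ν (Iio x)).toReal + v * ((ν (Iic x)).toReal - (ν (Iio x)).toReal) ≤ t} := by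
  rw [chi_eq]
  refine Measurable.ite (measurable_G ν measurableSet_Iic) measurable_const ?_
  refine Measurable.ite (measurable_L ν measurableSet_Iic) ?_ measurable_const
  exact ((measurable_const.sub (measurable_L ν)).div
    ((measurable_G ν).sub (measurable_L ν))).ennreal_ofReal


lemma core (ν : Measure ℝ) [IsProbabilityMeasure ν] (t : ℝ) :
    ∫⁻ x, (volume.restrict (Icc (0:ℝ) 1))
        {v : ℝ | (ν (Iio x)).toReal + v * ((ν (Iic x)).toReal - (ν (Iio x)).toReal) ≤ t} ∂ν
      = (volume.restrict (Icc (0:ℝ) 1)) (Iic t) := by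
  have hfin : ∀ s : Set ℝ, ν s ≠ ∞ := fun s => measure_ne_top ν s
  set G : ℝ → ℝ := fun x => (ν (Iic x)).toReal with hGdef
  set L : ℝ → ℝ := fun x => (ν (Iio x)).toReal with hLdef
  have hL0 : ∀ x, 0 ≤ L x := fun x => ENNReal.toReal_nonneg
  have hG0 : ∀ x, 0 ≤ G x := fun x => ENNReal.toReal_nonneg
  have hLG : ∀ x, L x ≤ G x := fun x =>
    ENNReal.toReal_mono (hfin _) (measure_mono Iio_subset_Iic_self)
  have hG1 : ∀ x, G x ≤ 1 := fun x => by
    have : ν (Iic x) ≤ 1 := prob_le_one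
    calc G x ≤ (1 : ℝ≥0∞).toReal := ENNReal.toReal_mono (by simp) this
      _ = 1 := by simp
  have hGmono : Monotone G := fun a b hab =>
    ENNReal.toReal_mono (hfin _) (measure_mono (Iic_subset_Iic.2 hab))
  have hIic : ∀ x, ν (Iic x) = ENNReal.ofReal (G x) := fun x =>
    (ENNReal.ofReal_toReal (hfin _)).symm
  have hIio : ∀ x, ν (Iio x) = ENNReal.ofReal (L x) := fun x =>
    (ENNReal.ofReal_toReal (hfin _)).symm
  have hint : ∀ x, (volume.restrict (Icc (0:ℝ) 1)) {v : ℝ | L x + v * (G x - L x) ≤ t}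
      = if G x ≤ t then 1 else if L x ≤ t then ENNReal.ofReal ((t - L x) / (G x - L x)) else 0 :=
    fun x => Usec (hL0 x) (hLG x)
  rw [lintegral_congr fun x => hint x]
  have hU : ∀ s : Set ℝ, (volume.restrict (Icc (0:ℝ) 1)) s = volume (s ∩ Icc 0 1) :=
    fun s => Measure.restrict_apply' measurableSet_Icc
  rcases le_or_gt 1 t with ht1 | ht1
  · have h1 : ∀ x, G x ≤ t := fun x => (hG1 x).trans ht1
    have : ∀ x : ℝ, (if G x ≤ t then (1:ℝ≥0∞)
        else if L x ≤ t then ENNReal.ofReal ((t - L x) / (G x - L x)) else 0) = 1 :=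
      fun x => if_pos (h1 x)
    rw [lintegral_congr this, lintegral_one, measure_univ, hU]
    have hic : Iic t ∩ Icc (0:ℝ) 1 = Icc 0 1 :=
      inter_eq_self_of_subset_right (fun x hx => mem_Iic.2 (le_trans hx.2 ht1))
    rw [hic]
    simp [Real.volume_Icc]
  rcases lt_or_ge t 0 with ht0 | ht0
  · have h1 : ∀ x, (if G x ≤ t then (1:ℝ≥0∞)
        else if L x ≤ t then ENNReal.ofReal ((t - L x) / (G x - L x)) else 0) = 0 := fun x => by
      rw [if_neg (by intro h; linarith [hG0 x]), if_neg (by intro h; linarith [hL0 x])]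
    rw [lintegral_congr h1, lintegral_zero, hU]
    have : Iic t ∩ Icc (0:ℝ) 1 = ∅ := by
      ext y
      simp only [mem_inter_iff, mem_Iic, mem_Icc, mem_empty_iff_false, iff_false, not_and]
      intro h1' h2'
      intro h3'
      linarith [h2']
    rw [this]
    simp
  · -- 0 ≤ t < 1
    have hRHS : (volume.restrict (Icc (0:ℝ) 1)) (Iic t) = ENNReal.ofReal t := by
      rw [hU]
      have : Iic t ∩ Icc (0:ℝ) 1 = Icc 0 t := by
        ext y
        simp only [mem_inter_iff, mem_Iic, mem_Icc]
        constructor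
        · rintro ⟨ha, hb, _⟩; exact ⟨hb, ha⟩
        · rintro ⟨ha, hb⟩; exact ⟨hb, ha, hb.trans ht1.le⟩
      rw [this, Real.volume_Icc, sub_zero]
    rw [hRHS]
    by_cases hall : ∀ x, t < G x
    · have ht' : t = 0 := by
        have hle : ∀ x : ℝ, ENNReal.ofReal t ≤ ν (Iic x) := fun x => by
          rw [hIic x]; exact ENNReal.ofReal_le_ofReal (hall x).le
        have hbot : ENNReal.ofReal t ≤ 0 := by
          have h1 : ENNReal.ofReal t ≤ ⨅ n : ℕ, ν (Iic (-(n:ℝ))) := le_iInf fun n => hle _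
          have h2 : (⋂ n : ℕ, Iic (-(n:ℝ))) = (∅ : Set ℝ) := by
            ext y
            simp only [mem_iInter, mem_Iic, mem_empty_iff_false, iff_false, not_forall]
            obtain ⟨n, hn⟩ := exists_nat_gt (-y)
            exact ⟨n, by push_neg; linarith⟩
          have hanti : Antitone fun n : ℕ => Iic (-(n:ℝ)) := fun n m hnm =>
            Iic_subset_Iic.2 (by exact_mod_cast neg_le_neg (Nat.cast_le.2 hnm))
          have h3 := hanti.measure_iInter (μ := ν)
            (fun n => measurableSet_Iic.nullMeasurableSet) ⟨0, hfin _⟩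
          rw [h2] at h3
          calc ENNReal.ofReal t ≤ ⨅ n : ℕ, ν (Iic (-(n:ℝ))) := h1
            _ = ν ∅ := h3.symm
            _ = 0 := measure_empty
        have := ENNReal.ofReal_eq_zero.1 (le_antisymm hbot zero_le)
        linarith
      subst ht'
      have h1 : ∀ x, (if G x ≤ (0:ℝ) then (1:ℝ≥0∞)
          else if L x ≤ 0 then ENNReal.ofReal ((0 - L x) / (G x - L x)) else 0) = 0 := fun x => by
        rw [if_neg (not_le.2 (hall x))]
        by_cases hLx : L x ≤ 0
        · rw [if_pos hLx]
          have : L x = 0 := le_antisymm hLx (hL0 x)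
          simp [this]
        · rw [if_neg hLx]
      rw [lintegral_congr h1, lintegral_zero]
      simp
    · push_neg at hall
      obtain ⟨x₀, hx₀⟩ := hall
      have hAne : {x : ℝ | t < G x}.Nonempty := by
        have h1 : (ENNReal.ofReal t) < 1 := by
          rw [← ENNReal.ofReal_one]
          exact (ENNReal.ofReal_lt_ofReal_iff (by norm_num)).2 ht1
        have h2 := tendsto_measure_Iic_atTop ν
        rw [measure_univ] at h2
        obtain ⟨x, hx⟩ := (h2.eventually (eventually_gt_nhds h1)).exists
        refine ⟨x, ?_⟩
        rw [hIic] at hx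
        simp only [mem_setOf_eq]
        exact (ENNReal.ofReal_lt_ofReal_iff_of_nonneg ht0).1 hx
      have hAbdd : BddBelow {x : ℝ | t < G x} := by
        refine ⟨x₀, fun x hx => ?_⟩
        by_contra h
        push_neg at h
        exact absurd hx (not_lt.2 ((hGmono h.le).trans hx₀))
      set a := sInf {x : ℝ | t < G x} with ha
      have h2 : ∀ x, a < x → ∃ z, t < G z ∧ z < x := fun x hx => by
        obtain ⟨z, hz1, hz2⟩ := (csInf_lt_iff hAbdd hAne).1 hx
        exact ⟨z, hz1, hz2⟩
      have h1 : ∀ x, x < a → G x ≤ t := fun x hx => by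
        by_contra h
        push_neg at h
        exact absurd (csInf_le hAbdd h) (not_le.2 hx)
      have h2G : ∀ x, a < x → t < G x := fun x hx => by
        obtain ⟨z, hz, hzx⟩ := h2 x hx
        exact lt_of_lt_of_le hz (hGmono hzx.le)
      have h2L : ∀ x, a < x → t ≤ L x := fun x hx => by
        obtain ⟨z, hz, hzx⟩ := h2 x hx
        refine hz.le.trans ?_
        exact ENNReal.toReal_mono (hfin _) (measure_mono (Iic_subset_Iio.2 hzx))
      have hLa : L a ≤ t := by
        have hle : ν (Iio a) ≤ ENNReal.ofReal t := by
          rw [measure_Iio_eq_iSup ν a]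
          refine iSup_le fun n => ?_
          rw [hIic]
          refine ENNReal.ofReal_le_ofReal (h1 _ ?_)
          have : 0 < 1 / ((n:ℝ) + 1) := by positivity
          linarith
        calc L a ≤ (ENNReal.ofReal t).toReal := ENNReal.toReal_mono (by simp) hle
          _ = t := ENNReal.toReal_ofReal ht0
      have hGa : t ≤ G a := by
        have hge : ENNReal.ofReal t ≤ ν (Iic a) := by
          rw [measure_Iic_eq_iInf ν a]
          refine le_iInf fun n => ?_
          rw [hIic]
          refine ENNReal.ofReal_le_ofReal (h2G _ ?_).le
          have : 0 < 1 / ((n:ℝ) + 1) := by positivity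
          linarith
        calc t = (ENNReal.ofReal t).toReal := (ENNReal.toReal_ofReal ht0).symm
          _ ≤ G a := ENNReal.toReal_mono (hfin _) hge
      -- split into indicators
      set f2 : ℝ → ℝ≥0∞ := fun x => ENNReal.ofReal ((t - L x) / (G x - L x)) with hf2
      set S1 : Set ℝ := {x : ℝ | G x ≤ t} with hS1
      set S2 : Set ℝ := {x : ℝ | ¬ G x ≤ t ∧ L x ≤ t} with hS2
      have hLmono : Monotone L := fun p q hpq =>
        ENNReal.toReal_mono (hfin _) (measure_mono (Iio_subset_Iio hpq))
      have hS1m : MeasurableSet S1 := hGmono.measurable measurableSet_Iic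
      have hS2m : MeasurableSet S2 :=
        (hGmono.measurable measurableSet_Iic).compl.inter (hLmono.measurable measurableSet_Iic)
      have hsplit : ∀ x, (if G x ≤ t then (1:ℝ≥0∞) else if L x ≤ t then f2 x else 0)
          = S1.indicator (fun _ => (1:ℝ≥0∞)) x + S2.indicator f2 x := fun x => by
        by_cases hx1 : G x ≤ t
        · have hm1 : x ∈ S1 := hx1
          have hn2 : x ∉ S2 := fun hc => hc.1 hx1
          rw [if_pos hx1, indicator_of_mem hm1 (fun _ => (1:ℝ≥0∞)),
            indicator_of_notMem hn2, add_zero]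
        · have hn1 : x ∉ S1 := hx1
          by_cases hx2 : L x ≤ t
          · have hm2 : x ∈ S2 := ⟨hx1, hx2⟩
            rw [if_neg hx1, if_pos hx2, indicator_of_notMem hn1,
              indicator_of_mem hm2, zero_add]
          · have hn2 : x ∉ S2 := fun hc => hx2 hc.2
            rw [if_neg hx1, if_neg hx2, indicator_of_notMem hn1,
              indicator_of_notMem hn2, add_zero]
      rw [lintegral_congr hsplit,
        lintegral_add_left (measurable_const.indicator hS1m),
        lintegral_indicator_const hS1m, one_mul]
      by_cases hGa' : G a ≤ t
      · have hGat : G a = t := le_antisymm hGa' hGa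
        have hS1e : S1 = Iic a := by
          ext x
          simp only [hS1, mem_setOf_eq, mem_Iic]
          constructor
          · intro h
            by_contra hc
            push_neg at hc
            exact absurd h (not_le.2 (h2G x hc))
          · intro h
            rcases h.lt_or_eq with h' | h'
            · exact h1 x h'
            · rw [h']; exact hGa'
        have hzero : ∀ x, S2.indicator f2 x = 0 := fun x => by
          by_cases hx : x ∈ S2
          · rw [indicator_of_mem hx]
            have hax : a < x := by
              rcases lt_trichotomy x a with h' | h' | h'
              · exact absurd (h1 x h') hx.1
              · exact absurd (h' ▸ hGa') hx.1
              · exact h'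
            have hLt : L x = t := le_antisymm hx.2 (h2L x hax)
            simp [hf2, hLt]
          · rw [indicator_of_notMem hx]
        have hz2 : ∫⁻ x, S2.indicator f2 x ∂ν = 0 := by
          rw [lintegral_congr hzero]
          simp
        rw [hz2, add_zero, hS1e, hIic a, hGat]
      · push_neg at hGa'
        have hS1e : S1 = Iio a := by
          ext x
          simp only [hS1, mem_setOf_eq, mem_Iio]
          constructor
          · intro h
            rcases lt_trichotomy x a with h' | h' | h'
            · exact h'
            · exact absurd (h' ▸ h) (not_le.2 hGa')
            · exact absurd h (not_le.2 (h2G x h'))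
          · exact h1 x
        have hamem : a ∈ S2 := ⟨not_le.2 hGa', hLa⟩
        have hind : S2.indicator f2 = ({a} : Set ℝ).indicator f2 := by
          funext x
          by_cases hx : x = a
          · rw [hx, indicator_of_mem (mem_singleton a), indicator_of_mem hamem]
          · rw [indicator_of_notMem (s := ({a} : Set ℝ)) (by simpa using hx)]
            by_cases hx2 : x ∈ S2
            · rw [indicator_of_mem hx2]
              have hax : a < x := by
                rcases lt_trichotomy x a with h' | h' | h'
                · exact absurd (h1 x h') hx2.1
                · exact absurd h' hx
                · exact h'
              have hLt : L x = t := le_antisymm hx2.2 (h2L x hax)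
              simp [hf2, hLt]
            · rw [indicator_of_notMem hx2]
        have hνa : ν {a} = ENNReal.ofReal (G a - L a) := by
          have hu : ν (Iic a) = ν (Iio a) + ν {a} := by
            rw [← Iio_union_right, measure_union (by simp) (measurableSet_singleton a)]
          rw [hIic, hIio] at hu
          rw [ENNReal.ofReal_sub _ (hL0 a)]
          exact ENNReal.eq_sub_of_add_eq ENNReal.ofReal_ne_top
            (by rw [add_comm]; exact hu.symm)
        have h2int : ∫⁻ x, S2.indicator f2 x ∂ν = ENNReal.ofReal (t - L a) := by
          rw [lintegral_congr (fun x => by rw [hind]),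
            lintegral_indicator (measurableSet_singleton a), lintegral_singleton, hνa, hf2]
          rw [← ENNReal.ofReal_mul (div_nonneg (sub_nonneg.2 hLa) (sub_nonneg.2 (hLG a)))]
          congr 1
          rw [div_mul_cancel₀]
          exact sub_ne_zero.2 (ne_of_gt (lt_of_le_of_lt hLa hGa'))
        rw [h2int, hS1e, hIio a, ← ENNReal.ofReal_add (hL0 a) (sub_nonneg.2 hLa)]
        congr 1
        ring


variable {α : Type*} [MeasurableSpace α]

noncomputable def Hfun (ρ : α → ℝ) (q : ℝ × α × Measure α) : ℝ :=
  (mIio (q.2.2.map ρ) (ρ q.2.1)).toReal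
    + q.1 * ((mIic (q.2.2.map ρ) (ρ q.2.1)).toReal - (mIio (q.2.2.map ρ) (ρ q.2.1)).toReal)

lemma measurable_Hfun {ρ : α → ℝ} (hρ : Measurable ρ) : Measurable (Hfun ρ) := by
  have hp : Measurable fun q : ℝ × α × Measure α => ((q.2.2.map ρ), ρ q.2.1) :=
    ((Measure.measurable_map ρ hρ).comp (measurable_snd.comp measurable_snd)).prodMk
      (hρ.comp (measurable_fst.comp measurable_snd))
  have h1 : Measurable fun q : ℝ × α × Measure α => (mIio (q.2.2.map ρ) (ρ q.2.1)).toReal :=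
    (measurable_mIio.comp hp).ennreal_toReal
  have h2 : Measurable fun q : ℝ × α × Measure α => (mIic (q.2.2.map ρ) (ρ q.2.1)).toReal :=
    (measurable_mIic.comp hp).ennreal_toReal
  exact h1.add (measurable_fst.mul (h2.sub h1))

lemma Hfun_eq {ρ : α → ℝ} (hρ : Measurable ρ) (v : ℝ) (y : α) (m : Measure α)
    [IsProbabilityMeasure m] :
    Hfun ρ (v, y, m) = Function.leftLim (cdf (m.map ρ)) (ρ y)
      + v * (cdf (m.map ρ) (ρ y) - Function.leftLim (cdf (m.map ρ)) (ρ y)) := by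
  haveI : IsProbabilityMeasure (m.map ρ) := Measure.isProbabilityMeasure_map hρ.aemeasurable
  rw [Hfun, mIic_eq, mIio_eq, leftLim_cdf_eq, cdf_eq_real, measureReal_def]

end AutoCalibAux

open AutoCalibAux

/-- If the multivariate forecast distribution `F` is auto-calibrated for `Y`
(the conditional law of `Y` given `F` equals `F`), then `F` is probabilistically calibrated
with respect to any measurable simple pre-rank function `ρ : ℝ^d → ℝ`: the randomized PIT
`Z = F_ρ(ρ(Y)-) + V (F_ρ(ρ(Y)) - F_ρ(ρ(Y)-))` is uniformly distributed on `[0,1]`, where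
`F_ρ` is the CDF of `ρ(X)` for `X ∼ F`, and `V` is standard uniform, independent of `(Y, F)`. -/
theorem autocalibration_implies_probabilistic_calibration
    {Ω : Type*} [MeasurableSpace Ω] (μ : Measure Ω) [IsProbabilityMeasure μ]
    (d : ℕ) (Y : Ω → (Fin d → ℝ)) (F : Ω → Measure (Fin d → ℝ)) (V : Ω → ℝ)
    (hY : Measurable Y) (hF : Measurable F) (hV : Measurable V)
    (hFprob : ∀ ω, IsProbabilityMeasure (F ω))
    (hauto : ∀ᵐ ω ∂μ, condDistrib Y F μ (F ω) = F ω)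
    (hVunif : μ.map V = volume.restrict (Set.Icc (0:ℝ) 1))
    (hindep : IndepFun V (fun ω => (Y ω, F ω)) μ)
    (ρ : (Fin d → ℝ) → ℝ) (hρ : Measurable ρ) :
    μ.map (fun ω =>
        Function.leftLim (cdf ((F ω).map ρ)) (ρ (Y ω))
          + V ω * (cdf ((F ω).map ρ) (ρ (Y ω))
              - Function.leftLim (cdf ((F ω).map ρ)) (ρ (Y ω))))
      = volume.restrict (Set.Icc (0:ℝ) 1) := by
  haveI : IsFiniteMeasure (volume.restrict (Set.Icc (0:ℝ) 1)) := by
    constructor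
    rw [Measure.restrict_apply_univ, Real.volume_Icc]
    simp
  -- rewrite the mapped function through Hfun
  have hfeq : (fun ω =>
        Function.leftLim (cdf ((F ω).map ρ)) (ρ (Y ω))
          + V ω * (cdf ((F ω).map ρ) (ρ (Y ω))
              - Function.leftLim (cdf ((F ω).map ρ)) (ρ (Y ω))))
      = fun ω => Hfun ρ (V ω, Y ω, F ω) := by
    funext ω
    haveI := hFprob ω
    rw [Hfun_eq hρ]
  rw [hfeq]
  have hW : Measurable fun ω => (V ω, Y ω, F ω) := hV.prodMk (hY.prodMk hF)
  have hZ : Measurable fun ω => Hfun ρ (V ω, Y ω, F ω) := (measurable_Hfun hρ).comp hW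
  haveI : IsProbabilityMeasure (μ.map fun ω => Hfun ρ (V ω, Y ω, F ω)) :=
    Measure.isProbabilityMeasure_map hZ.aemeasurable
  refine Measure.ext_of_Iic _ _ fun t => ?_
  -- notation
  set U := volume.restrict (Set.Icc (0:ℝ) 1) with hUdef
  set S : Set (ℝ × (Fin d → ℝ) × Measure (Fin d → ℝ)) := Hfun ρ ⁻¹' (Iic t) with hSdef
  have hS : MeasurableSet S := (measurable_Hfun hρ) measurableSet_Iic
  haveI : IsProbabilityMeasure (μ.map V) := Measure.isProbabilityMeasure_map hV.aemeasurable
  haveI : IsProbabilityMeasure (μ.map fun ω => (Y ω, F ω)) :=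
    Measure.isProbabilityMeasure_map (hY.prodMk hF).aemeasurable
  haveI : IsProbabilityMeasure (μ.map fun ω => (F ω, Y ω)) :=
    Measure.isProbabilityMeasure_map (hF.prodMk hY).aemeasurable
  have hΨ : Measurable fun p : (Fin d → ℝ) × Measure (Fin d → ℝ) =>
      U ((fun v => (v, p)) ⁻¹' S) := by
    exact measurable_measure_prodMk_right hS
  have hΨ' : Measurable fun q : Measure (Fin d → ℝ) × (Fin d → ℝ) =>
      U ((fun v => (v, (q.2, q.1))) ⁻¹' S) :=
    hΨ.comp (measurable_snd.prodMk measurable_fst)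
  have hprod : μ.map (fun ω => (V ω, Y ω, F ω))
      = (μ.map V).prod (μ.map fun ω => (Y ω, F ω)) :=
    (indepFun_iff_map_prod_eq_prod_map_map hV.aemeasurable
      (hY.prodMk hF).aemeasurable).1 hindep
  have hdis : μ.map (fun ω => (F ω, Y ω)) = (μ.map F) ⊗ₘ condDistrib Y F μ := by
    rw [condDistrib_def]
    conv_lhs => rw [← (μ.map fun ω => (F ω, Y ω)).disintegrate
      (μ.map fun ω => (F ω, Y ω)).condKernel]
    rw [Measure.fst_map_prodMk hY]
  have key : ∀ m : Measure (Fin d → ℝ), IsProbabilityMeasure m →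
      ∫⁻ y, U ((fun v => (v, (y, m))) ⁻¹' S) ∂m = U (Iic t) := by
    intro m hm
    haveI := hm
    haveI : IsProbabilityMeasure (m.map ρ) := Measure.isProbabilityMeasure_map hρ.aemeasurable
    have h1 : ∀ y, U ((fun v => (v, (y, m))) ⁻¹' S)
        = (fun x => U {v : ℝ | ((m.map ρ) (Iio x)).toReal
            + v * (((m.map ρ) (Iic x)).toReal - ((m.map ρ) (Iio x)).toReal) ≤ t}) (ρ y) := by
      intro y
      congr 1
      ext v
      simp only [hSdef, mem_preimage, mem_Iic, mem_setOf_eq, Hfun, mIic_eq, mIio_eq]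
    rw [lintegral_congr h1, ← lintegral_map (measurable_chi (m.map ρ) t) hρ]
    exact core (m.map ρ) t
  calc (μ.map fun ω => Hfun ρ (V ω, Y ω, F ω)) (Iic t)
      = μ ((fun ω => (V ω, Y ω, F ω)) ⁻¹' S) := by
        rw [Measure.map_apply hZ measurableSet_Iic]; rfl
    _ = (μ.map fun ω => (V ω, Y ω, F ω)) S := (Measure.map_apply hW hS).symm
    _ = ((μ.map V).prod (μ.map fun ω => (Y ω, F ω))) S := by rw [hprod]
    _ = (U.prod (μ.map fun ω => (Y ω, F ω))) S := by rw [hVunif]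
    _ = ∫⁻ p, U ((fun v => (v, p)) ⁻¹' S) ∂(μ.map fun ω => (Y ω, F ω)) :=
        Measure.prod_apply_symm hS
    _ = ∫⁻ ω, U ((fun v => (v, (Y ω, F ω))) ⁻¹' S) ∂μ := lintegral_map hΨ (hY.prodMk hF)
    _ = ∫⁻ q, U ((fun v => (v, (q.2, q.1))) ⁻¹' S) ∂(μ.map fun ω => (F ω, Y ω)) :=
        (lintegral_map hΨ' (hF.prodMk hY)).symm
    _ = ∫⁻ q, U ((fun v => (v, (q.2, q.1))) ⁻¹' S) ∂((μ.map F) ⊗ₘ condDistrib Y F μ) := by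
        rw [hdis]
    _ = ∫⁻ m, ∫⁻ y, U ((fun v => (v, (y, m))) ⁻¹' S) ∂(condDistrib Y F μ m) ∂(μ.map F) :=
        Measure.lintegral_compProd hΨ'
    _ = ∫⁻ ω, ∫⁻ y, U ((fun v => (v, (y, F ω))) ⁻¹' S) ∂(condDistrib Y F μ (F ω)) ∂μ :=
        lintegral_map (hΨ'.lintegral_kernel_prod_right') hF
    _ = ∫⁻ ω, U (Iic t) ∂μ := by
        refine lintegral_congr_ae ?_
        filter_upwards [hauto] with ω hω
        rw [hω]
        exact key (F ω) (hFprob ω)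
    _ = U (Iic t) := by rw [lintegral_const, measure_univ, mul_one]
end

section
/- If Y is a real-valued random variable with distribution function F and V is an independent standard uniform random variable, then the randomized probability integral transform Z = F(Y-) + V[F(Y) - F(Y-)] is uniformly distributed on [0,1]. -/
open MeasureTheory ProbabilityTheory Set Filter Topology

lemma unif_Iic_eval (c : ℝ) :
    (volume.restrict (Set.Icc (0:ℝ) 1)) (Set.Iic c) = ENNReal.ofReal (min c 1) := by
  rw [Measure.restrict_apply measurableSet_Iic]
  have h : Set.Iic c ∩ Set.Icc (0:ℝ) 1 = Set.Icc 0 (min c 1) := by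
    ext v
    simp only [Set.mem_inter_iff, Set.mem_Iic, Set.mem_Icc, le_min_iff]
    tauto
  rw [h, Real.volume_Icc, sub_zero]

/-- The randomized probability integral transform
`Z = F(Y-) + V (F(Y) - F(Y-))`, where `F` is the CDF of `Y` and `V` is a standard
uniform variable independent of `Y`, is uniformly distributed on `[0,1]`. -/
theorem randomized_pit_uniform {Ω : Type*} [MeasurableSpace Ω]
    (μ : Measure Ω) [IsProbabilityMeasure μ]
    (Y V : Ω → ℝ) (hY : Measurable Y) (hV : Measurable V)
    (hVunif : μ.map V = volume.restrict (Set.Icc (0:ℝ) 1))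
    (hindep : IndepFun Y V μ) :
    μ.map (fun ω =>
        Function.leftLim (cdf (μ.map Y)) (Y ω)
          + V ω * (cdf (μ.map Y) (Y ω) - Function.leftLim (cdf (μ.map Y)) (Y ω)))
      = volume.restrict (Set.Icc (0:ℝ) 1) := by
  have hunifprob : IsProbabilityMeasure (volume.restrict (Set.Icc (0:ℝ) 1)) := by
    constructor
    rw [Measure.restrict_apply MeasurableSet.univ, Set.univ_inter, Real.volume_Icc]
    norm_num
  set ν : Measure ℝ := μ.map Y with hν
  have hνprob : IsProbabilityMeasure ν := Measure.isProbabilityMeasure_map hY.aemeasurable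
  set F : StieltjesFunction ℝ := cdf ν with hFdef
  set a : ℝ → ℝ := Function.leftLim F with hadef
  have hamono : Monotone a := F.mono.leftLim
  have haF : ∀ x, a x ≤ F x := fun x => F.mono.leftLim_le le_rfl
  have hF0 : ∀ x, 0 ≤ F x := cdf_nonneg ν
  have hF1 : ∀ x, F x ≤ 1 := cdf_le_one ν
  have ha0 : ∀ x, 0 ≤ a x := fun x =>
    le_trans (hF0 (x - 1)) (F.mono.le_leftLim (sub_one_lt x))
  have haMeas : Measurable a := hamono.measurable
  have hFMeas : Measurable F := F.mono.measurable
  -- basic measure identities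
  have hIic : ∀ x, ν (Set.Iic x) = ENNReal.ofReal (F x) := fun x => (ofReal_cdf ν x).symm
  have hsing : ∀ x, ν {x} = ENNReal.ofReal (F x - a x) := by
    intro x
    conv_lhs => rw [← measure_cdf ν]
    exact (cdf ν).measure_singleton x
  have hIio : ∀ x, ν (Set.Iio x) = ENNReal.ofReal (a x) := by
    intro x
    have h1 : Set.Iio x = Set.Iic x \ {x} := by
      ext z; simp [lt_iff_le_and_ne]
    rw [h1, measure_diff (Set.singleton_subset_iff.mpr Set.self_mem_Iic)
        (measurableSet_singleton x).nullMeasurableSet (measure_ne_top ν _), hIic, hsing]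
    rw [← ENNReal.ofReal_sub _ (sub_nonneg.mpr (haF x))]
    congr 1; ring
  -- rewrite as pushforward of product measure
  set g : ℝ × ℝ → ℝ := fun p => a p.1 + p.2 * (F p.1 - a p.1) with hgdef
  have hgMeas : Measurable g :=
    (haMeas.comp measurable_fst).add
      (measurable_snd.mul ((hFMeas.comp measurable_fst).sub (haMeas.comp measurable_fst)))
  have hmap : μ.map (fun ω => (Y ω, V ω))
      = ν.prod (volume.restrict (Set.Icc (0:ℝ) 1)) := by
    rw [← hVunif]
    exact (indepFun_iff_map_prod_eq_prod_map_map hY.aemeasurable hV.aemeasurable).mp hindep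
  have hgoal : μ.map (fun ω =>
      Function.leftLim (cdf (μ.map Y)) (Y ω)
        + V ω * (cdf (μ.map Y) (Y ω) - Function.leftLim (cdf (μ.map Y)) (Y ω)))
      = (ν.prod (volume.restrict (Set.Icc (0:ℝ) 1))).map g := by
    rw [← hmap, Measure.map_map hgMeas (hY.prodMk hV)]
    rfl
  rw [hgoal]
  have : IsProbabilityMeasure ((ν.prod (volume.restrict (Set.Icc (0:ℝ) 1))).map g) :=
    Measure.isProbabilityMeasure_map hgMeas.aemeasurable
  refine Measure.ext_of_Iic _ _ (fun t => ?_)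
  rw [Measure.map_apply hgMeas measurableSet_Iic, unif_Iic_eval,
    Measure.prod_apply (hgMeas measurableSet_Iic)]
  -- slice measurability and evaluation
  have hSm : ∀ y : ℝ, MeasurableSet {v : ℝ | a y + v * (F y - a y) ≤ t} := by
    intro y
    exact measurableSet_le ((measurable_id.mul_const _).const_add _) measurable_const
  have hslice : ∀ y : ℝ, (Prod.mk y ⁻¹' (g ⁻¹' Set.Iic t))
      = {v : ℝ | a y + v * (F y - a y) ≤ t} := fun y => rfl
  have hslice_one : ∀ y : ℝ, F y ≤ t →
      (volume.restrict (Set.Icc (0:ℝ) 1)) {v : ℝ | a y + v * (F y - a y) ≤ t} = 1 := by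
    intro y hy
    rw [Measure.restrict_apply (hSm y)]
    have hsub : Set.Icc (0:ℝ) 1 ⊆ {v : ℝ | a y + v * (F y - a y) ≤ t} := by
      intro v hv
      have h1 : v * (F y - a y) ≤ 1 * (F y - a y) :=
        mul_le_mul_of_nonneg_right hv.2 (sub_nonneg.mpr (haF y))
      simp only [Set.mem_setOf_eq]
      nlinarith
    rw [Set.inter_eq_self_of_subset_right hsub, Real.volume_Icc]
    norm_num
  have hslice_zero : ∀ y : ℝ, t < a y →
      (volume.restrict (Set.Icc (0:ℝ) 1)) {v : ℝ | a y + v * (F y - a y) ≤ t} = 0 := by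
    intro y hy
    rw [Measure.restrict_apply (hSm y)]
    have hempty : {v : ℝ | a y + v * (F y - a y) ≤ t} ∩ Set.Icc (0:ℝ) 1 = ∅ := by
      ext v
      simp only [Set.mem_inter_iff, Set.mem_setOf_eq, Set.mem_Icc, Set.mem_empty_iff_false,
        iff_false]
      rintro ⟨hle, h0, h1v⟩
      have : 0 ≤ v * (F y - a y) := mul_nonneg h0 (sub_nonneg.mpr (haF y))
      linarith
    rw [hempty, measure_empty]
  have hslice_mid : ∀ y : ℝ, a y ≤ t → t < F y →
      (volume.restrict (Set.Icc (0:ℝ) 1)) {v : ℝ | a y + v * (F y - a y) ≤ t}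
        = ENNReal.ofReal ((t - a y) / (F y - a y)) := by
    intro y h1 h2
    have hc : 0 < F y - a y := by linarith
    have hset : {v : ℝ | a y + v * (F y - a y) ≤ t}
        = Set.Iic ((t - a y) / (F y - a y)) := by
      ext v
      simp only [Set.mem_setOf_eq, Set.mem_Iic]
      rw [le_div_iff₀ hc]
      constructor <;> intro h <;> linarith
    rw [hset, unif_Iic_eval]
    congr 1
    apply min_eq_left
    rw [div_le_one hc]
    linarith
  simp only [hslice]
  -- now compute the integral
  by_cases ht0 : t < 0
  · have hz : ∀ y : ℝ, (volume.restrict (Set.Icc (0:ℝ) 1)) {v : ℝ | a y + v * (F y - a y) ≤ t} = 0 := by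
      intro y
      exact hslice_zero y (lt_of_lt_of_le ht0 (ha0 y))
    rw [lintegral_congr hz, lintegral_zero]
    symm
    rw [ENNReal.ofReal_eq_zero]
    exact le_trans (min_le_left _ _) ht0.le
  push_neg at ht0
  by_cases ht1 : 1 ≤ t
  · have hz : ∀ y : ℝ, (volume.restrict (Set.Icc (0:ℝ) 1)) {v : ℝ | a y + v * (F y - a y) ≤ t} = 1 := by
      intro y
      exact hslice_one y (le_trans (hF1 y) ht1)
    rw [lintegral_congr hz, lintegral_one, measure_univ, min_eq_right ht1]
    norm_num
  push_neg at ht1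
  -- main case : 0 ≤ t < 1
  rw [min_eq_left ht1.le]
  set S1 : Set ℝ := {y | F y ≤ t} with hS1def
  have hS1m : MeasurableSet S1 := measurableSet_le hFMeas measurable_const
  set S2 : Set ℝ := {y | a y ≤ t ∧ t < F y} with hS2def
  have hS2sub : S2.Subsingleton := by
    intro y1 h1 y2 h2
    by_contra hne
    rcases lt_or_gt_of_ne hne with h | h
    · have : F y1 ≤ a y2 := F.mono.le_leftLim h
      have := h1.2
      have := h2.1
      linarith
    · have : F y2 ≤ a y1 := F.mono.le_leftLim h
      have := h2.2
      have := h1.1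
      linarith
  rw [← lintegral_add_compl _ hS1m]
  -- on S1 slice = 1
  have hint1 : ∫⁻ y in S1, (volume.restrict (Set.Icc (0:ℝ) 1)) {v : ℝ | a y + v * (F y - a y) ≤ t} ∂ν = ν S1 := by
    rw [setLIntegral_congr_fun hS1m
      (fun y hy => hslice_one y hy)]
    simp
  rw [hint1]
  rcases S2.eq_empty_or_nonempty with hS2 | hS2
  · -- no atom straddling t
    have hzero : ∫⁻ y in S1ᶜ, (volume.restrict (Set.Icc (0:ℝ) 1)) {v : ℝ | a y + v * (F y - a y) ≤ t} ∂ν = 0 := by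
      rw [setLIntegral_congr_fun hS1m.compl (fun y hy => ?_)]
      · exact lintegral_zero
      · have hFy : t < F y := lt_of_not_ge hy
        have hay : t < a y := by
          by_contra hc
          push_neg at hc
          exact (Set.eq_empty_iff_forall_notMem.mp hS2 y) ⟨hc, hFy⟩
        exact hslice_zero y hay
    rw [hzero, add_zero]
    -- ν S1 = ofReal t
    rcases S1.eq_empty_or_nonempty with hS1e | hS1e
    · have ht : t ≤ 0 := by
        by_contra hc
        push_neg at hc
        obtain ⟨y, hy⟩ := ((tendsto_cdf_atBot ν).eventually (eventually_lt_nhds hc)).exists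
        exact (Set.eq_empty_iff_forall_notMem.mp hS1e y) hy.le
      have : t = 0 := le_antisymm ht ht0
      rw [hS1e, measure_empty, this, ENNReal.ofReal_zero]
    · have hbdd : BddAbove S1 := by
        obtain ⟨y1, hy1⟩ := ((tendsto_cdf_atTop ν).eventually (eventually_gt_nhds ht1)).exists
        refine ⟨y1, fun y hy => ?_⟩
        by_contra hc
        push_neg at hc
        exact absurd (lt_of_lt_of_le hy1 (F.mono hc.le)) (not_lt.mpr hy)
      set s := sSup S1 with hsdef
      have hFs : F s ≤ t := by
        by_contra hc
        push_neg at hc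
        have has : a s ≤ t := by
          refine le_of_tendsto (F.mono.tendsto_leftLim s) ?_
          filter_upwards [self_mem_nhdsWithin] with y (hy : y < s)
          obtain ⟨z, hz, hyz⟩ := exists_lt_of_lt_csSup hS1e hy
          exact le_trans (F.mono hyz.le) hz
        exact (Set.eq_empty_iff_forall_notMem.mp hS2 s) ⟨has, hc⟩
      have hIicS : S1 = Set.Iic s := by
        apply Set.eq_of_subset_of_subset
        · exact fun y hy => le_csSup hbdd hy
        · exact fun y hy => le_trans (F.mono hy) hFs
      have hts : t ≤ F s := by
        refine ge_of_tendsto ((F.right_continuous s).tendsto.mono_left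
          (nhdsWithin_mono _ Set.Ioi_subset_Ici_self)) ?_
        filter_upwards [self_mem_nhdsWithin] with y (hy : s < y)
        by_contra hc
        push_neg at hc
        exact absurd (le_csSup hbdd (hc.le : y ∈ S1)) (not_le.mpr hy)
      rw [hIicS, hIic, le_antisymm hFs hts]
  · -- S2 = {y0}
    obtain ⟨y0, hy0⟩ := hS2
    have hS2eq : S2 = {y0} := hS2sub.eq_singleton_of_mem hy0
    have hay0 : a y0 ≤ t := hy0.1
    have hFy0 : t < F y0 := hy0.2
    have hS1eq : S1 = Set.Iio y0 := by
      apply Set.eq_of_subset_of_subset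
      · intro y hy
        by_contra hc
        rw [Set.mem_Iio, not_lt] at hc
        exact absurd (lt_of_lt_of_le hFy0 (F.mono hc)) (not_lt.mpr hy)
      · intro y hy
        exact le_trans (F.mono.le_leftLim hy) hay0
    have hmid : ∫⁻ y in S1ᶜ, (volume.restrict (Set.Icc (0:ℝ) 1)) {v : ℝ | a y + v * (F y - a y) ≤ t} ∂ν
        = ENNReal.ofReal (t - a y0) := by
      have hcong : ∀ y ∈ S1ᶜ, (volume.restrict (Set.Icc (0:ℝ) 1)) {v : ℝ | a y + v * (F y - a y) ≤ t}
          = Set.indicator {y0} (fun _ => ENNReal.ofReal ((t - a y0) / (F y0 - a y0))) y := by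
        intro y hy
        have hFy : t < F y := lt_of_not_ge hy
        by_cases hyy : y = y0
        · rw [hyy, Set.indicator_of_mem (Set.mem_singleton y0)]
          exact hslice_mid y0 hay0 (hyy ▸ hFy)
        · rw [Set.indicator_of_notMem (fun h => hyy (Set.mem_singleton_iff.mp h))]
          have hay : t < a y := by
            by_contra hc
            push_neg at hc
            have h2 : y ∈ ({y0} : Set ℝ) := hS2eq ▸ (⟨hc, hFy⟩ : y ∈ S2)
            exact hyy (Set.mem_singleton_iff.mp h2)
          exact hslice_zero y hay
      rw [setLIntegral_congr_fun hS1m.compl hcong,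
        lintegral_indicator (measurableSet_singleton y0)]
      rw [Measure.restrict_restrict (measurableSet_singleton y0)]
      have hy0c : {y0} ∩ S1ᶜ = {y0} := by
        rw [Set.inter_eq_self_of_subset_left]
        intro z hz
        rw [Set.mem_singleton_iff] at hz
        subst hz
        exact not_le.mpr hFy0
      rw [hy0c, lintegral_singleton, hsing]
      rw [← ENNReal.ofReal_mul (div_nonneg (by linarith) (by linarith))]
      congr 1
      field_simp
      rw [mul_div_assoc, div_self (ne_of_gt (by linarith : (0:ℝ) < F y0 - a y0)), mul_one]
    rw [hmid, hS1eq, hIio, ← ENNReal.ofReal_add (ha0 y0) (by linarith)]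
    congr 1
    ring
end

section
/- Conversely, if Z = F(Y-) + V[F(Y) - F(Y-)] is uniformly distributed on [0,1] for V ~ Uniform[0,1] independent of Y, where F is a fixed cumulative distribution function, then Y has distribution function F. -/
open MeasureTheory ProbabilityTheory Filter

/-- If `Z = F(Y-) + V (F(Y) - F(Y-))` is uniformly distributed on `[0,1]`,
where `F` is a fixed cumulative distribution function and `V` is standard uniform and
independent of `Y`, then `Y` has distribution function `F`. -/
theorem pit_uniform_implies_cdf {Ω : Type*} [MeasurableSpace Ω]
    (μ : Measure Ω) [IsProbabilityMeasure μ]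
    (Y V : Ω → ℝ) (hY : Measurable Y) (hV : Measurable V)
    (F : ℝ → ℝ) (hFmono : Monotone F)
    (hFright : ∀ x, ContinuousWithinAt F (Set.Ici x) x)
    (hFbot : Tendsto F atBot (nhds 0)) (hFtop : Tendsto F atTop (nhds 1))
    (hVunif : μ.map V = volume.restrict (Set.Icc (0:ℝ) 1))
    (hindep : IndepFun Y V μ)
    (hZ : μ.map (fun ω =>
        Function.leftLim F (Y ω) + V ω * (F (Y ω) - Function.leftLim F (Y ω)))
      = volume.restrict (Set.Icc (0:ℝ) 1)) :
    ∀ y : ℝ, (μ.map Y (Set.Iic y)).toReal = F y := by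
  intro y
  set Z : Ω → ℝ := fun ω =>
    Function.leftLim F (Y ω) + V ω * (F (Y ω) - Function.leftLim F (Y ω)) with hZdef
  have hLmeas : Measurable (Function.leftLim F) := (hFmono.leftLim).measurable
  have hZmeas : Measurable Z := by
    apply Measurable.add (hLmeas.comp hY)
    exact hV.mul ((hFmono.measurable.comp hY).sub (hLmeas.comp hY))
  -- F y ∈ [0,1]
  have hF0 : 0 ≤ F y := le_of_tendsto hFbot (by
    filter_upwards [eventually_le_atBot y] with x hx using hFmono hx)
  have hF1 : F y ≤ 1 := ge_of_tendsto hFtop (by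
    filter_upwards [eventually_ge_atTop y] with x hx using hFmono hx)
  -- V ∈ [0,1] a.e.
  have hVae : ∀ᵐ ω ∂μ, V ω ∈ Set.Icc (0:ℝ) 1 := by
    have : μ (V ⁻¹' (Set.Icc (0:ℝ) 1)ᶜ) = 0 := by
      rw [← Measure.map_apply hV measurableSet_Icc.compl, hVunif,
        Measure.restrict_apply measurableSet_Icc.compl]
      simp
    exact this
  -- μ {Z = F y} = 0
  have hatom : μ {ω | Z ω = F y} = 0 := by
    have : μ (Z ⁻¹' {F y}) = 0 := by
      rw [← Measure.map_apply hZmeas (measurableSet_singleton _), hZ]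
      exact le_antisymm ((Measure.restrict_apply_le _ _).trans (by simp)) zero_le
    exact this
  -- μ {Z ≤ F y} = ofReal (F y)
  have hZle : μ {ω | Z ω ≤ F y} = ENNReal.ofReal (F y) := by
    have : μ (Z ⁻¹' Set.Iic (F y)) = ENNReal.ofReal (F y) := by
      rw [← Measure.map_apply hZmeas measurableSet_Iic, hZ,
        Measure.restrict_apply measurableSet_Iic]
      have hset : Set.Iic (F y) ∩ Set.Icc (0:ℝ) 1 = Set.Icc 0 (F y) := by
        ext x
        simp only [Set.mem_inter_iff, Set.mem_Iic, Set.mem_Icc]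
        exact ⟨fun ⟨h1, h2, _⟩ => ⟨h2, h1⟩, fun ⟨h1, h2⟩ => ⟨h2, h1, h2.trans hF1⟩⟩
      rw [hset, Real.volume_Icc]
      simp
    exact this
  -- key a.e. inclusions
  have hkey1 : ∀ᵐ ω ∂μ, Y ω ≤ y → Z ω ≤ F y := by
    filter_upwards [hVae] with ω hVω hYω
    have h1 : Function.leftLim F (Y ω) ≤ F (Y ω) := hFmono.leftLim_le le_rfl
    have h2 : V ω * (F (Y ω) - Function.leftLim F (Y ω)) ≤ F (Y ω) - Function.leftLim F (Y ω) :=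
      mul_le_of_le_one_left (by linarith) hVω.2
    have : Z ω ≤ F (Y ω) := by simp only [hZdef]; linarith
    exact this.trans (hFmono hYω)
  have hkey2 : ∀ᵐ ω ∂μ, Z ω ≤ F y → Y ω ≤ y ∨ Z ω = F y := by
    filter_upwards [hVae] with ω hVω hZω
    by_contra h
    push_neg at h
    obtain ⟨h1, h2⟩ := h
    have hy : y < Y ω := h1
    have hL : F y ≤ Function.leftLim F (Y ω) := hFmono.le_leftLim hy
    have hnn : 0 ≤ V ω * (F (Y ω) - Function.leftLim F (Y ω)) :=
      mul_nonneg hVω.1 (by have := hFmono.leftLim_le (le_refl (Y ω)); linarith)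
    have : F y ≤ Z ω := by simp only [hZdef]; linarith
    exact h2 (le_antisymm hZω this)
  -- conclude μ {Y ≤ y} = μ {Z ≤ F y}
  have hAB : μ {ω | Y ω ≤ y} = μ {ω | Z ω ≤ F y} := by
    apply le_antisymm
    · calc μ {ω | Y ω ≤ y} ≤ μ ({ω | Z ω ≤ F y} ∪ {ω | ¬ (Y ω ≤ y → Z ω ≤ F y)}) := by
            apply measure_mono
            intro ω hω
            by_cases h : Y ω ≤ y → Z ω ≤ F y
            · exact Or.inl (h hω)
            · exact Or.inr h
        _ ≤ μ {ω | Z ω ≤ F y} + μ {ω | ¬ (Y ω ≤ y → Z ω ≤ F y)} := measure_union_le _ _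
        _ = μ {ω | Z ω ≤ F y} := by
            rw [ae_iff.mp hkey1]; simp
    · calc μ {ω | Z ω ≤ F y}
          ≤ μ ({ω | Y ω ≤ y} ∪ ({ω | Z ω = F y} ∪ {ω | ¬ (Z ω ≤ F y → Y ω ≤ y ∨ Z ω = F y)})) := by
            apply measure_mono
            intro ω hω
            by_cases h : Z ω ≤ F y → Y ω ≤ y ∨ Z ω = F y
            · rcases h hω with h' | h'
              · exact Or.inl h'
              · exact Or.inr (Or.inl h')
            · exact Or.inr (Or.inr h)
        _ ≤ μ {ω | Y ω ≤ y} + μ ({ω | Z ω = F y} ∪ {ω | ¬ (Z ω ≤ F y → Y ω ≤ y ∨ Z ω = F y)}) :=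
            measure_union_le _ _
        _ ≤ μ {ω | Y ω ≤ y} + (μ {ω | Z ω = F y} + μ {ω | ¬ (Z ω ≤ F y → Y ω ≤ y ∨ Z ω = F y)}) :=
            add_le_add le_rfl (measure_union_le _ _)
        _ = μ {ω | Y ω ≤ y} := by
            rw [hatom, ae_iff.mp hkey2]; simp
  rw [Measure.map_apply hY measurableSet_Iic]
  have : μ (Y ⁻¹' Set.Iic y) = ENNReal.ofReal (F y) := by
    rw [show Y ⁻¹' Set.Iic y = {ω | Y ω ≤ y} from rfl, hAB, hZle]
  rw [this, ENNReal.toReal_ofReal hF0]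
end
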